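/- arXiv:math/0505435 — 4 statements merged into one kernel-verified Lean document; each statement's English description precedes it below -/
import Mathlib

section
/- Consider the Ceva combinatorics: six lines l_1,...,l_6 whose points of multiplicity greater than two are exactly {l_1,l_2,l_3}, {l_1,l_5,l_6}, {l_2,l_4,l_6}, {l_3,l_4,l_5}, all other intersections being double points. Fix a basis {v_1,v_2} of Z^2. Then the map α : H → Z^2 given by α(e_1)=α(e_4)=v_1, α(e_2)=α(e_5)=v_2, α(e_3)=α(e_6)=-v_1-v_2 is a 3-admissible map. -/
open scoped BigOperators

/-- `H = ℤⁿ / ℤ·(1,…,1)`. -/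
abbrev Hmod (n : ℕ) : Type := (Fin n → ℤ) ⧸ Submodule.span ℤ {(fun _ => (1 : ℤ) : Fin n → ℤ)}

/-- The class `e_i` of the `i`-th standard basis vector in `H`. -/
def egen (n : ℕ) (i : Fin n) : Hmod n := Submodule.Quotient.mk (Pi.single i 1)

/-- A line combinatorics on `n` lines. -/
structure LineCombinatorics (n : ℕ) where
  P : Finset (Finset (Fin n))
  two_le : ∀ p ∈ P, 2 ≤ p.card
  existsUnique : ∀ i j : Fin n, i ≠ j → ∃! p, p ∈ P ∧ i ∈ p ∧ j ∈ p

/-- The four triple points of the Ceva combinatorics (lines `l_1,…,l_6`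
corresponding to `0,…,5`): `{l₁,l₂,l₃}`, `{l₁,l₅,l₆}`, `{l₂,l₄,l₆}`,
`{l₃,l₄,l₅}`. -/
def cevaTriples : Finset (Finset (Fin 6)) :=
  {({0, 1, 2} : Finset (Fin 6)), {0, 4, 5}, {1, 3, 5}, {2, 3, 4}}

/-!
Each of the four triple points of the Ceva combinatorics meets every class
`{l₁, l₄}`, `{l₂, l₅}`, `{l₃, l₆}` exactly once, and `v₁ + v₂ + (-v₁ - v₂) = 0`,
so `α` sums to zero over a triple point. Two lines from different classes
always lie on a common triple point, so by uniqueness of the point through two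
lines every other point consists of lines of a single class; there `α` is
constant and the sum is a multiple of `α(e_i)`.
-/

lemma LinearIndependent.not_pair_smul_right {R M : Type*} [Ring R] [Nontrivial R]
    [AddCommGroup M] [Module R M] (u : M) (c : R) :
    ¬ LinearIndependent R ![u, c • u] := by
  rw [LinearIndependent.pair_iff]
  intro h
  simpa using (h c (-1) (by rw [neg_one_smul, add_neg_cancel])).2

lemma LineCombinatorics.eq_of_mem_of_mem {n : ℕ} (C : LineCombinatorics n)
    {p q : Finset (Fin n)} (hp : p ∈ C.P) (hq : q ∈ C.P) {i j : Fin n} (hij : i ≠ j)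
    (hip : i ∈ p) (hjp : j ∈ p) (hiq : i ∈ q) (hjq : j ∈ q) : p = q :=
  (C.existsUnique i j hij).unique ⟨hp, hip, hjp⟩ ⟨hq, hiq, hjq⟩

namespace Hmod

variable {n : ℕ} {M : Type*} [AddCommGroup M]

def lift (w : Fin n → M) (hw : ∑ i, w i = 0) : Hmod n →ₗ[ℤ] M :=
  Submodule.liftQ _ (Fintype.linearCombination ℤ w) <| by
    rw [Submodule.span_singleton_le_iff_mem, LinearMap.mem_ker,
      Fintype.linearCombination_apply]
    simpa only [one_smul] using hw

@[simp]
lemma lift_egen (w : Fin n → M) (hw : ∑ i, w i = 0) (i : Fin n) :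
    lift w hw (egen n i) = w i := by
  simp [lift, egen, Fintype.linearCombination_apply_single]

end Hmod

def cevaClass : Fin 6 → Fin 3 := ![0, 1, 2, 0, 1, 2]

lemma cevaClass_injOn_triple :
    ∀ t ∈ cevaTriples, ∀ i ∈ t, ∀ j ∈ t, cevaClass i = cevaClass j → i = j := by
  decide

lemma image_cevaClass_triple : ∀ t ∈ cevaTriples, t.image cevaClass = Finset.univ := by
  decide

lemma cevaClass_eq_of_not_mem_triple :
    ∀ i j : Fin 6, (∀ t ∈ cevaTriples, ¬ (i ∈ t ∧ j ∈ t)) → cevaClass i = cevaClass j := by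
  decide

section CevaClass

variable {M : Type*} [AddCommGroup M] {W : Fin 3 → M}

lemma sum_cevaClass (hW : ∑ k, W k = 0) : ∑ i, W (cevaClass i) = 0 :=
  calc ∑ i, W (cevaClass i) = ∑ k, W k + ∑ k, W k := by
        simp only [Fin.sum_univ_six, Fin.sum_univ_three]
        simp only [cevaClass, Matrix.cons_val]
        abel
    _ = 0 := by rw [hW, add_zero]

lemma sum_cevaClass_triple (hW : ∑ k, W k = 0) {t : Finset (Fin 6)} (ht : t ∈ cevaTriples) :
    ∑ i ∈ t, W (cevaClass i) = 0 := by
  rw [← Finset.sum_image (cevaClass_injOn_triple t ht), image_cevaClass_triple t ht, hW]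

end CevaClass

lemma cevaClass_eq_of_mem_point (C : LineCombinatorics 6)
    (htriples : ∀ p ∈ cevaTriples, p ∈ C.P) {p : Finset (Fin 6)} (hp : p ∈ C.P)
    (hpt : p ∉ cevaTriples) {i j : Fin 6} (hi : i ∈ p) (hj : j ∈ p) :
    cevaClass i = cevaClass j := by
  by_cases hij : i = j
  · rw [hij]
  refine cevaClass_eq_of_not_mem_triple i j fun t ht ⟨hit, hjt⟩ => hpt ?_
  rwa [C.eq_of_mem_of_mem hp (htriples t ht) hij hi hj hit hjt]

theorem ceva_admissible_general (C : LineCombinatorics 6)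
    (htriples : ∀ p ∈ cevaTriples, p ∈ C.P)
    (v : Module.Basis (Fin 2) ℤ (Fin 2 → ℤ)) :
    ∃ α : Hmod 6 →ₗ[ℤ] (Fin 2 → ℤ),
      α (egen 6 0) = v 0 ∧ α (egen 6 3) = v 0 ∧
      α (egen 6 1) = v 1 ∧ α (egen 6 4) = v 1 ∧
      α (egen 6 2) = -v 0 - v 1 ∧ α (egen 6 5) = -v 0 - v 1 ∧
      Function.Surjective α ∧
      ∀ p ∈ C.P, ∀ i ∈ p,
        ¬ LinearIndependent ℤ ![α (egen 6 i), ∑ j ∈ p, α (egen 6 j)] := by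
  set W : Fin 3 → Fin 2 → ℤ := ![v 0, v 1, -v 0 - v 1]
  have hW : ∑ k, W k = 0 := by simp [W, Fin.sum_univ_three]
  set α := Hmod.lift (fun i => W (cevaClass i)) (sum_cevaClass hW)
  have hα (i : Fin 6) : α (egen 6 i) = W (cevaClass i) := Hmod.lift_egen ..
  refine ⟨α, hα 0, hα 3, hα 1, hα 4, hα 2, hα 5, ?_, ?_⟩
  · rw [← LinearMap.range_eq_top, eq_top_iff, ← v.span_eq, Submodule.span_le]
    rintro _ ⟨k, rfl⟩
    fin_cases k
    exacts [⟨egen 6 0, hα 0⟩, ⟨egen 6 1, hα 1⟩]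
  intro p hp i hi
  by_cases hpt : p ∈ cevaTriples
  · rw [Finset.sum_congr rfl fun j _ => hα j, sum_cevaClass_triple hW hpt]
    exact zero_smul ℤ (α (egen 6 i)) ▸ LinearIndependent.not_pair_smul_right _ 0
  · have hconst : ∀ j ∈ p, α (egen 6 j) = α (egen 6 i) := fun j hj => by
      rw [hα, hα, cevaClass_eq_of_mem_point C htriples hp hpt hj hi]
    rw [Finset.sum_congr rfl hconst, Finset.sum_const, ← Nat.cast_smul_eq_nsmul ℤ]
    exact LinearIndependent.not_pair_smul_right _ _

/-- For the Ceva combinatorics (six lines whose points of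
multiplicity greater than two are exactly the four triples above, all other
points being double) and a basis `{v₁, v₂}` of `ℤ²`, the map
`α(e₁)=α(e₄)=v₁`, `α(e₂)=α(e₅)=v₂`, `α(e₃)=α(e₆)=-v₁-v₂` is a 3-admissible
map. -/
theorem ceva_admissible (C : LineCombinatorics 6)
    (htriples : ∀ p ∈ cevaTriples, p ∈ C.P)
    (hmult : ∀ p ∈ C.P, 3 ≤ p.card ↔ p ∈ cevaTriples)
    (v : Module.Basis (Fin 2) ℤ (Fin 2 → ℤ)) :
    ∃ α : Hmod 6 →ₗ[ℤ] (Fin 2 → ℤ),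
      α (egen 6 0) = v 0 ∧ α (egen 6 3) = v 0 ∧
      α (egen 6 1) = v 1 ∧ α (egen 6 4) = v 1 ∧
      α (egen 6 2) = -v 0 - v 1 ∧ α (egen 6 5) = -v 0 - v 1 ∧
      Function.Surjective α ∧
      ∀ p ∈ C.P, ∀ i ∈ p,
        ¬ LinearIndependent ℤ ![α (egen 6 i), ∑ j ∈ p, α (egen 6 j)] :=
  ceva_admissible_general C htriples v
end

section
/- Let A be a real n×n matrix that is indecomposable, with a_{ij} ≤ 0 for i ≠ j, and such that a_{ij} = 0 implies a_{ji} = 0. Then exactly one of the following holds (and the same alternative holds for the transpose of A): (Fin) det(A) ≠ 0, there exists u > 0 with Au > 0, and Av ≥ 0 implies v = 0 or v > 0; (Aff) corank(A) = 1, there exists u > 0 with Au = 0, and Av ≥ 0 implies Av = 0; (Ind) there exists u > 0 with Au < 0, and Av ≥ 0 together with v ≥ 0 implies v = 0. -/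
open scoped BigOperators
open Matrix

/-- All entries of a real vector are positive. -/
def VecPos {n : ℕ} (u : Fin n → ℝ) : Prop := ∀ i, 0 < u i

/-- All entries of a real vector are nonnegative. -/
def VecNonneg {n : ℕ} (u : Fin n → ℝ) : Prop := ∀ i, 0 ≤ u i

/-- All entries of a real vector are negative. -/
def VecNeg {n : ℕ} (u : Fin n → ℝ) : Prop := ∀ i, u i < 0

/-- A matrix is indecomposable: there is no nontrivial partition `I ⊔ J` of the
index set with `A i j = 0` for all `i ∈ I`, `j ∈ J`. -/
def Indecomposable {n : ℕ} (A : Matrix (Fin n) (Fin n) ℝ) : Prop :=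
  ∀ I : Finset (Fin n), I ≠ ∅ → I ≠ Finset.univ → ∃ i ∈ I, ∃ j ∈ Iᶜ, A i j ≠ 0

/-- Type (Fin): `det A ≠ 0`; some `u > 0` with `Au > 0`; `Av ≥ 0` implies
`v = 0` or `v > 0`. -/
def VinbergFin {n : ℕ} (A : Matrix (Fin n) (Fin n) ℝ) : Prop :=
  A.det ≠ 0 ∧ (∃ u, VecPos u ∧ VecPos (A.mulVec u)) ∧
    ∀ v, VecNonneg (A.mulVec v) → v = 0 ∨ VecPos v

/-- Type (Aff): `corank A = 1`; some `u > 0` with `Au = 0`; `Av ≥ 0` implies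
`Av = 0`. -/
def VinbergAff {n : ℕ} (A : Matrix (Fin n) (Fin n) ℝ) : Prop :=
  A.rank = n - 1 ∧ (∃ u, VecPos u ∧ A.mulVec u = 0) ∧
    ∀ v, VecNonneg (A.mulVec v) → A.mulVec v = 0

/-- Type (Ind): some `u > 0` with `Au < 0`; `Av ≥ 0` and `v ≥ 0` imply `v = 0`. -/
def VinbergInd {n : ℕ} (A : Matrix (Fin n) (Fin n) ℝ) : Prop :=
  (∃ u, VecPos u ∧ VecNeg (A.mulVec u)) ∧
    ∀ v, VecNonneg (A.mulVec v) → VecNonneg v → v = 0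

/-! Everything is governed by two properties of a Z-matrix `A`: whether some nonzero `v ≥ 0` has
`Av ≥ 0`, and whether some `v > 0` has `Av = 0`. Indecomposability forces such a nonnegative `v`
to be positive. Once `v > 0` with `Av ≥ 0` is at hand, subtracting from any `u` with `Au ≥ 0` the
largest multiple of `v` lying below it shows that `u` is `0`, positive, or a negative multiple of
`v`, and in the last case `Av = 0`. Gordan's alternative (separating `0` from the image of a
simplex) says that `A` has no `u > 0` with `Au < 0` exactly when `Aᵀ` has a nonzero `v ≥ 0` with
`Aᵀv ≥ 0`; combined with the previous fact, both properties pass to the transpose. Then (Aff)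
means a positive kernel vector, (Fin) a nonzero `v ≥ 0` with `Av ≥ 0` but no positive kernel
vector, and (Ind) no nonzero `v ≥ 0` with `Av ≥ 0`. -/

theorem gordan_alternative {ι κ : Type*} [Fintype ι] [Fintype κ] (M : Matrix ι κ ℝ) :
    (∃ x, ∀ i, (M *ᵥ x) i < 0) ∨ ∃ y ∈ stdSimplex ℝ ι, y ᵥ* M = 0 := by
  classical
  by_cases h0 : (0 : κ → ℝ) ∈ M.vecMulLinear '' stdSimplex ℝ ι
  · obtain ⟨y, hy, hyM⟩ := h0
    exact Or.inr ⟨y, hy, hyM⟩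
  obtain ⟨f, u, hfu, hu0⟩ := geometric_hahn_banach_closed_point
    ((convex_stdSimplex ℝ ι).linear_image M.vecMulLinear)
    ((isCompact_stdSimplex ℝ ι).image M.vecMulLinear.continuous_of_finiteDimensional).isClosed h0
  refine Or.inl ⟨fun j => f (Pi.single j 1), fun i => ?_⟩
  have hfi : f (M i) = (M *ᵥ fun j => f (Pi.single j 1)) i := by
    calc f (M i) = f (∑ j, M i j • Pi.single j 1) := by congr 1; ext j; simp [Pi.single_apply]
      _ = _ := by simp only [map_sum, map_smul, smul_eq_mul]; rfl
  have hfMi := hfu _ ⟨_, single_mem_stdSimplex ℝ i, rfl⟩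
  rw [vecMulLinear_apply, single_one_vecMul] at hfMi
  rw [map_zero] at hu0
  rw [← hfi]
  exact hfMi.trans hu0

section Vectors

variable {n : ℕ}

theorem VecPos.vecNonneg {u : Fin n → ℝ} (hu : VecPos u) : VecNonneg u :=
  fun i => (hu i).le

theorem VecPos.ne_zero [NeZero n] {u : Fin n → ℝ} (hu : VecPos u) : u ≠ 0 :=
  fun h => (hu 0).ne' (congrFun h 0)

theorem eq_zero_of_dotProduct_eq_zero {p x : Fin n → ℝ} (hp : VecPos p) (hx : VecNonneg x)
    (h : p ⬝ᵥ x = 0) : x = 0 := by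
  have hterms := (Finset.sum_eq_zero_iff_of_nonneg fun i _ => mul_nonneg (hp i).le (hx i)).1 h
  funext i
  exact (mul_eq_zero.1 (hterms i (Finset.mem_univ i))).resolve_left (hp i).ne'

theorem exists_vecNonneg_sub_smul_apply_eq_zero [Nonempty (Fin n)] (u : Fin n → ℝ)
    {v : Fin n → ℝ} (hv : VecPos v) :
    ∃ c : ℝ, ∃ i, VecNonneg (u - c • v) ∧ (u - c • v) i = 0 := by
  obtain ⟨i, -, hi⟩ := Finset.exists_min_image Finset.univ (fun i => u i / v i)
    Finset.univ_nonempty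
  refine ⟨u i / v i, i, fun j => ?_, ?_⟩
  · have := (le_div_iff₀ (hv j)).1 (hi j (Finset.mem_univ j))
    simp only [Pi.sub_apply, Pi.smul_apply, smul_eq_mul]
    linarith
  · simp [div_mul_cancel₀ _ (hv i).ne']

end Vectors

section ZMatrix

variable {n : ℕ} {A : Matrix (Fin n) (Fin n) ℝ}

theorem Indecomposable.transpose (hind : Indecomposable A)
    (hsym : ∀ i j, A i j = 0 → A j i = 0) : Indecomposable Aᵀ := by
  intro I hI hI'
  obtain ⟨i, hi, j, hj, hij⟩ := hind I hI hI'
  exact ⟨i, hi, j, hj, fun h => hij (hsym j i h)⟩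

theorem eq_zero_or_vecPos_of_vecNonneg (hind : Indecomposable A)
    (hoff : ∀ i j, i ≠ j → A i j ≤ 0) {u : Fin n → ℝ} (hu : VecNonneg u)
    (hAu : VecNonneg (A *ᵥ u)) : u = 0 ∨ VecPos u := by
  classical
  by_contra! h
  obtain ⟨hne, hnpos⟩ := h
  obtain ⟨i₀, hi₀⟩ := not_forall.1 hnpos
  obtain ⟨i, hi, j, hj, hij⟩ := hind (Finset.univ.filter fun i => u i = 0)
    (Finset.ne_empty_of_mem (Finset.mem_filter.2
      ⟨Finset.mem_univ _, le_antisymm (not_lt.1 hi₀) (hu i₀)⟩))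
    (fun h => hne (funext fun i => by
      have hi : i ∈ Finset.univ.filter fun i => u i = 0 := by
        rw [h]; exact Finset.mem_univ i
      exact (Finset.mem_filter.1 hi).2))
  simp only [Finset.mem_compl, Finset.mem_filter, Finset.mem_univ, true_and] at hi hj
  have hterm : ∀ k, A i k * u k ≤ 0 := fun k => by
    rcases eq_or_ne k i with rfl | hki
    · simp [hi]
    · exact mul_nonpos_of_nonpos_of_nonneg (hoff i k hki.symm) (hu k)
  have hji : i ≠ j := fun h => hj (h ▸ hi)
  have hterm_j : A i j * u j < 0 :=
    mul_neg_of_neg_of_pos ((hoff i j hji).lt_of_ne hij) ((hu j).lt_of_ne (Ne.symm hj))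
  have hAui : (A *ᵥ u) i < 0 :=
    calc (A *ᵥ u) i = ∑ k, A i k * u k := rfl
      _ < ∑ _k : Fin n, (0 : ℝ) :=
        Finset.sum_lt_sum (fun k _ => hterm k) ⟨j, Finset.mem_univ _, hterm_j⟩
      _ = 0 := Finset.sum_const_zero
  exact (hAu i).not_gt hAui

theorem eq_zero_of_vecNonneg_of_apply_eq_zero (hind : Indecomposable A)
    (hoff : ∀ i j, i ≠ j → A i j ≤ 0) {u : Fin n → ℝ} (hu : VecNonneg u)
    (hAu : VecNonneg (A *ᵥ u)) {i : Fin n} (hi : u i = 0) : u = 0 :=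
  (eq_zero_or_vecPos_of_vecNonneg hind hoff hu hAu).resolve_right fun h => (h i).ne' hi

theorem mulVec_eq_zero_and_eq_smul_of_not_vecNonneg (hind : Indecomposable A)
    (hoff : ∀ i j, i ≠ j → A i j ≤ 0) {u v : Fin n → ℝ} (hv : VecPos v)
    (hAv : VecNonneg (A *ᵥ v)) (hAu : VecNonneg (A *ᵥ u)) (hu : ¬VecNonneg u) :
    A *ᵥ v = 0 ∧ ∃ c : ℝ, u = c • v := by
  obtain ⟨i₀, hi₀⟩ := not_forall.1 hu
  have : Nonempty (Fin n) := ⟨i₀⟩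
  obtain ⟨c, i, hw, hwi⟩ := exists_vecNonneg_sub_smul_apply_eq_zero u hv
  have hc : c < 0 := by
    have := hw i₀
    simp only [Pi.sub_apply, Pi.smul_apply, smul_eq_mul] at this
    nlinarith [hv i₀]
  have hAw : VecNonneg (A *ᵥ (u - c • v)) := fun k => by
    simp only [mulVec_sub, mulVec_smul, Pi.sub_apply, Pi.smul_apply, smul_eq_mul]
    nlinarith [hAu k, hAv k]
  have huv : u = c • v :=
    sub_eq_zero.1 (eq_zero_of_vecNonneg_of_apply_eq_zero hind hoff hw hAw hwi)
  refine ⟨funext fun k => ?_, c, huv⟩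
  show (A *ᵥ v) k = 0
  have := hAu k
  rw [huv, mulVec_smul, Pi.smul_apply, smul_eq_mul] at this
  exact le_antisymm (by nlinarith) (hAv k)

theorem ker_mulVecLin_eq_span [Nonempty (Fin n)] (hind : Indecomposable A)
    (hoff : ∀ i j, i ≠ j → A i j ≤ 0) {v : Fin n → ℝ} (hv : VecPos v)
    (hAv : A *ᵥ v = 0) : LinearMap.ker A.mulVecLin = ℝ ∙ v := by
  ext x
  rw [LinearMap.mem_ker, mulVecLin_apply, Submodule.mem_span_singleton]
  constructor
  · intro hAx
    obtain ⟨c, i, hw, hwi⟩ := exists_vecNonneg_sub_smul_apply_eq_zero x hv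
    have hAw : A *ᵥ (x - c • v) = 0 := by
      rw [mulVec_sub, mulVec_smul, hAx, hAv, smul_zero, sub_zero]
    have := eq_zero_of_vecNonneg_of_apply_eq_zero hind hoff hw (hAw ▸ fun _ => le_rfl) hwi
    exact ⟨c, (sub_eq_zero.1 this).symm⟩
  · rintro ⟨c, rfl⟩
    rw [mulVec_smul, hAv, smul_zero]

end ZMatrix

section Alternatives

variable {n : ℕ} {A : Matrix (Fin n) (Fin n) ℝ}

def HasPosKernelVec (A : Matrix (Fin n) (Fin n) ℝ) : Prop :=
  ∃ v, VecPos v ∧ A *ᵥ v = 0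

def HasNonnegSupersolution (A : Matrix (Fin n) (Fin n) ℝ) : Prop :=
  ∃ v, VecNonneg v ∧ v ≠ 0 ∧ VecNonneg (A *ᵥ v)

theorem HasPosKernelVec.hasNonnegSupersolution [NeZero n] (h : HasPosKernelVec A) :
    HasNonnegSupersolution A := by
  obtain ⟨v, hv, hAv⟩ := h
  exact ⟨v, hv.vecNonneg, hv.ne_zero, hAv ▸ fun _ => le_rfl⟩

theorem exists_vecPos_vecNeg_or_hasNonnegSupersolution_transpose
    (A : Matrix (Fin n) (Fin n) ℝ) :
    (∃ u, VecPos u ∧ VecNeg (A *ᵥ u)) ∨ HasNonnegSupersolution Aᵀ := by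
  -- The rows of `-1` encode `u > 0` as part of Gordan's strict system.
  rcases gordan_alternative (fromRows A (-1 : Matrix (Fin n) (Fin n) ℝ)) with
    ⟨x, hx⟩ | ⟨y, ⟨hy0, hy1⟩, hyM⟩
  · refine Or.inl ⟨x, fun i => ?_, fun i => ?_⟩
    · simpa [neg_mulVec] using hx (Sum.inr i)
    · simpa using hx (Sum.inl i)
  · rw [vecMul_fromRows, vecMul_neg, vecMul_one, ← sub_eq_add_neg, sub_eq_zero,
      ← mulVec_transpose] at hyM
    refine Or.inr ⟨y ∘ Sum.inl, fun i => hy0 _, fun hp => ?_, hyM ▸ fun i => hy0 _⟩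
    rw [hp, mulVec_zero] at hyM
    have hy : y = 0 := funext fun
      | .inl i => congrFun hp i
      | .inr i => (congrFun hyM i).symm
    simp [hy] at hy1

theorem HasNonnegSupersolution.transpose (hind : Indecomposable A)
    (hoff : ∀ i j, i ≠ j → A i j ≤ 0) (h : HasNonnegSupersolution A) :
    HasNonnegSupersolution Aᵀ := by
  obtain ⟨p, hp, hpne, hAp⟩ := h
  have hppos := (eq_zero_or_vecPos_of_vecNonneg hind hoff hp hAp).resolve_left hpne
  refine (exists_vecPos_vecNeg_or_hasNonnegSupersolution_transpose A).resolve_left ?_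
  rintro ⟨u, hu, hAu⟩
  obtain ⟨i, -⟩ := Function.ne_iff.1 hpne
  have hAnu : VecNonneg (A *ᵥ -u) := fun k => by
    rw [mulVec_neg, Pi.neg_apply]
    exact (neg_pos.2 (hAu k)).le
  obtain ⟨hAp0, c, hc⟩ := mulVec_eq_zero_and_eq_smul_of_not_vecNonneg hind hoff hppos hAp hAnu
    fun h => (h i).not_gt (neg_neg_of_pos (hu i))
  have hAu0 : A *ᵥ u = 0 := by
    rw [← neg_neg u, hc, mulVec_neg, mulVec_smul, hAp0, smul_zero, neg_zero]
  exact (hAu i).ne (congrFun hAu0 i)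

theorem hasNonnegSupersolution_transpose_iff (hind : Indecomposable A)
    (hoff : ∀ i j, i ≠ j → A i j ≤ 0) (hsym : ∀ i j, A i j = 0 → A j i = 0) :
    HasNonnegSupersolution Aᵀ ↔ HasNonnegSupersolution A :=
  ⟨fun h => by simpa using h.transpose (hind.transpose hsym) fun i j hij => hoff j i hij.symm,
    fun h => h.transpose hind hoff⟩

theorem HasPosKernelVec.transpose [NeZero n] (hind : Indecomposable A)
    (hoff : ∀ i j, i ≠ j → A i j ≤ 0) (hsym : ∀ i j, A i j = 0 → A j i = 0)
    (h : HasPosKernelVec A) : HasPosKernelVec Aᵀ := by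
  obtain ⟨p, hp, hpne, hATp⟩ := h.hasNonnegSupersolution.transpose hind hoff
  have hppos := (eq_zero_or_vecPos_of_vecNonneg (hind.transpose hsym)
    (fun i j hij => hoff j i hij.symm) hp hATp).resolve_left hpne
  obtain ⟨v, hv, hAv⟩ := h
  refine ⟨p, hppos, eq_zero_of_dotProduct_eq_zero hv hATp ?_⟩
  rw [mulVec_transpose, dotProduct_comm, ← dotProduct_mulVec, hAv, dotProduct_zero]

theorem hasPosKernelVec_transpose_iff [NeZero n] (hind : Indecomposable A)
    (hoff : ∀ i j, i ≠ j → A i j ≤ 0) (hsym : ∀ i j, A i j = 0 → A j i = 0) :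
    HasPosKernelVec Aᵀ ↔ HasPosKernelVec A :=
  ⟨fun h => by
    simpa using h.transpose (hind.transpose hsym) (fun i j hij => hoff j i hij.symm)
      fun i j => hsym j i,
    fun h => h.transpose hind hoff hsym⟩

theorem vinbergFin_iff [NeZero n] (hind : Indecomposable A)
    (hoff : ∀ i j, i ≠ j → A i j ≤ 0) :
    VinbergFin A ↔ HasNonnegSupersolution A ∧ ¬HasPosKernelVec A := by
  constructor
  · rintro ⟨hdet, ⟨u, hu, hAu⟩, -⟩
    refine ⟨⟨u, hu.vecNonneg, hu.ne_zero, hAu.vecNonneg⟩, fun ⟨v, hv, hAv⟩ => ?_⟩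
    exact hdet (exists_mulVec_eq_zero_iff.1 ⟨v, hv.ne_zero, hAv⟩)
  rintro ⟨⟨q, hq, hqne, hAq⟩, hker⟩
  have hqpos := (eq_zero_or_vecPos_of_vecNonneg hind hoff hq hAq).resolve_left hqne
  have hsol : ∀ v, VecNonneg (A *ᵥ v) → v = 0 ∨ VecPos v := fun v hAv => by
    by_cases hv : VecNonneg v
    · exact eq_zero_or_vecPos_of_vecNonneg hind hoff hv hAv
    · exact absurd ⟨q, hqpos,
        (mulVec_eq_zero_and_eq_smul_of_not_vecNonneg hind hoff hqpos hAq hAv hv).1⟩ hker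
  have hdet : A.det ≠ 0 := fun hdet => by
    obtain ⟨v, hvne, hAv⟩ := exists_mulVec_eq_zero_iff.2 hdet
    exact hker ⟨v, (hsol v (hAv ▸ fun _ => le_rfl)).resolve_left hvne, hAv⟩
  have hAu : A *ᵥ (A⁻¹ *ᵥ 1) = 1 := by
    rw [mulVec_mulVec, mul_nonsing_inv _ (isUnit_iff_ne_zero.2 hdet), one_mulVec]
  have hupos : VecPos (A⁻¹ *ᵥ 1) :=
    (hsol _ (by rw [hAu]; exact fun _ => zero_le_one)).resolve_left fun h => by simp [h] at hAu
  exact ⟨hdet, ⟨_, hupos, by rw [hAu]; exact fun _ => one_pos⟩, hsol⟩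

theorem vinbergAff_iff [NeZero n] (hind : Indecomposable A)
    (hoff : ∀ i j, i ≠ j → A i j ≤ 0) (hsym : ∀ i j, A i j = 0 → A j i = 0) :
    VinbergAff A ↔ HasPosKernelVec A := by
  refine ⟨fun h => h.2.1, fun hker => ?_⟩
  obtain ⟨p, hp, hATp⟩ := hker.transpose hind hoff hsym
  obtain ⟨v, hv, hAv⟩ := hker
  have hrank : A.rank + 1 = n := by
    have := LinearMap.finrank_range_add_finrank_ker A.mulVecLin
    rwa [ker_mulVecLin_eq_span hind hoff hv hAv, finrank_span_singleton hv.ne_zero,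
      Module.finrank_fin_fun] at this
  refine ⟨by omega, ⟨v, hv, hAv⟩, fun w hAw => eq_zero_of_dotProduct_eq_zero hp hAw ?_⟩
  rw [dotProduct_mulVec, ← mulVec_transpose, hATp, zero_dotProduct]

theorem vinbergInd_iff (hind : Indecomposable A) (hoff : ∀ i j, i ≠ j → A i j ≤ 0)
    (hsym : ∀ i j, A i j = 0 → A j i = 0) :
    VinbergInd A ↔ ¬HasNonnegSupersolution A := by
  constructor
  · rintro ⟨-, h⟩ ⟨q, hq, hqne, hAq⟩
    exact hqne (h q hAq hq)
  · intro h
    refine ⟨?_, fun v hAv hv => by_contra fun hvne => h ⟨v, hv, hvne, hAv⟩⟩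
    exact (exists_vecPos_vecNeg_or_hasNonnegSupersolution_transpose A).resolve_right
      fun hT => h ((hasNonnegSupersolution_transpose_iff hind hoff hsym).1 hT)

end Alternatives

/-- **Vinberg's classification.** For a real indecomposable
`n × n` matrix with nonpositive off-diagonal entries and sign-symmetric zeros,
exactly one of the alternatives (Fin), (Aff), (Ind) holds, and each alternative
holds for `A` iff it holds for `Aᵀ`. -/
theorem vinberg_classification {n : ℕ} (hn : 0 < n) (A : Matrix (Fin n) (Fin n) ℝ)
    (hind : Indecomposable A)
    (hoff : ∀ i j, i ≠ j → A i j ≤ 0)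
    (hsym : ∀ i j, A i j = 0 → A j i = 0) :
    ((VinbergFin A ↔ VinbergFin Aᵀ) ∧ (VinbergAff A ↔ VinbergAff Aᵀ) ∧
      (VinbergInd A ↔ VinbergInd Aᵀ)) ∧
    ((VinbergFin A ∧ ¬ VinbergAff A ∧ ¬ VinbergInd A) ∨
      (¬ VinbergFin A ∧ VinbergAff A ∧ ¬ VinbergInd A) ∨
      (¬ VinbergFin A ∧ ¬ VinbergAff A ∧ VinbergInd A)) := by
  have : NeZero n := ⟨hn.ne'⟩
  have hindT := hind.transpose hsym
  have hoffT : ∀ i j, i ≠ j → Aᵀ i j ≤ 0 := fun i j hij => hoff j i hij.symm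
  have hsymT : ∀ i j, Aᵀ i j = 0 → Aᵀ j i = 0 := fun i j => hsym j i
  have hkerSol : HasPosKernelVec A → HasNonnegSupersolution A := fun h => h.hasNonnegSupersolution
  rw [vinbergFin_iff hind hoff, vinbergFin_iff hindT hoffT, vinbergAff_iff hind hoff hsym,
    vinbergAff_iff hindT hoffT hsymT, vinbergInd_iff hind hoff hsym,
    vinbergInd_iff hindT hoffT hsymT, hasNonnegSupersolution_transpose_iff hind hoff hsym,
    hasPosKernelVec_transpose_iff hind hoff hsym]
  tauto
end

section
/- Let (L,P) be a line combinatorics with admissible map α, χ_α := {p ∈ P : Σ_{l∈p} α(e_l) = 0}, and Q the n×n symmetric matrix with Q_{ii} = #{p ∈ χ_α : l_i ∈ p} - 1, Q_{ij} = 0 if l_i ∩ l_j ∈ χ_α, and Q_{ij} = -1 otherwise (i ≠ j). Then for every line l_i, the relation -Q_{ii}·α(e_i) + Σ_{l_j : l_i∩l_j ∉ χ_α} α(e_j) = 0 holds; equivalently, the matrix M whose columns are α(e_1),...,α(e_n) satisfies MQ = 0. -/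
open scoped BigOperators

/-- `α : H → ℤ^r` is an `(r+1)`-admissible map. -/
def IsAdmissible {n : ℕ} (C : LineCombinatorics n) (r : ℕ)
    (α : Hmod n →ₗ[ℤ] (Fin r → ℤ)) : Prop :=
  Function.Surjective α ∧
    ∀ p ∈ C.P, ∀ i ∈ p,
      ¬ LinearIndependent ℤ ![α (egen n i), ∑ j ∈ p, α (egen n j)]

/-- `χ_α`: the points where the `α`-images of the lines sum up to zero. -/
def chiSet {n r : ℕ} (C : LineCombinatorics n) (α : Hmod n →ₗ[ℤ] (Fin r → ℤ)) :
    Finset (Finset (Fin n)) :=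
  C.P.filter (fun p => ∑ l ∈ p, α (egen n l) = 0)

/-- The matrix `Q`: `Q_{ii} = #{p ∈ χ_α : l_i ∈ p} - 1`; for `i ≠ j`,
`Q_{ij} = 0` if `l_i ∩ l_j ∈ χ_α` and `Q_{ij} = -1` otherwise. -/
def Qmat {n r : ℕ} (C : LineCombinatorics n) (α : Hmod n →ₗ[ℤ] (Fin r → ℤ)) :
    Matrix (Fin n) (Fin n) ℤ :=
  fun i j =>
    if i = j then ((chiSet C α).filter (fun p => i ∈ p)).card - 1
    else if ∃ p ∈ chiSet C α, i ∈ p ∧ j ∈ p then 0 else -1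

/-- For an admissible map `α`, every line `l_i` satisfies
`-Q_{ii}·α(e_i) + ∑_{j : l_i∩l_j ∉ χ_α} α(e_j) = 0`; equivalently the matrix
`M` whose columns are `α(e_1),…,α(e_n)` satisfies `M·Q = 0`. -/
theorem rows_annihilate_Q {n k : ℕ} (hk : 3 ≤ k) (C : LineCombinatorics n)
    (α : Hmod n →ₗ[ℤ] (Fin (k - 1) → ℤ)) (hadm : IsAdmissible C (k - 1) α) :
    (∀ i : Fin n,
      -(Qmat C α i i) • α (egen n i) +
        ∑ j ∈ Finset.univ.filter
          (fun j => j ≠ i ∧ ¬ ∃ p ∈ chiSet C α, i ∈ p ∧ j ∈ p),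
          α (egen n j) = 0) ∧
    (Matrix.of (fun (a : Fin (k - 1)) (j : Fin n) => α (egen n j) a)) * Qmat C α = 0 := by
  classical
  set f : Fin n → (Fin (k-1) → ℤ) := fun j => α (egen n j) with hf
  -- total sum is zero
  have hsumall : ∑ j, f j = 0 := by
    have h1 : (∑ j : Fin n, egen n j) = 0 := by
      have h2 : (∑ j : Fin n, (Pi.single j (1:ℤ) : Fin n → ℤ)) = fun _ => (1:ℤ) := by
        ext x; simp [Finset.sum_apply, Pi.single_apply]
      have h4 : (∑ j : Fin n, egen n j) =
          (Submodule.Quotient.mk (∑ j : Fin n, (Pi.single j (1:ℤ) : Fin n → ℤ)) : Hmod n) := by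
        simp [egen, ← Submodule.mkQ_apply, map_sum]
      rw [h4, h2, Submodule.Quotient.mk_eq_zero]
      exact Submodule.mem_span_singleton_self _
    calc ∑ j, f j = α (∑ j, egen n j) := by rw [map_sum]
    _ = 0 := by rw [h1, map_zero]
  -- main pointwise statement
  have key : ∀ i : Fin n,
      -(Qmat C α i i) • f i +
        ∑ j ∈ Finset.univ.filter
          (fun j => j ≠ i ∧ ¬ ∃ p ∈ chiSet C α, i ∈ p ∧ j ∈ p), f j = 0 := by
    intro i
    set S : Finset (Finset (Fin n)) := (chiSet C α).filter (fun p => i ∈ p) with hS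
    have hchiP : ∀ p ∈ chiSet C α, p ∈ C.P := fun p hp => (Finset.mem_filter.1 hp).1
    have hchi0 : ∀ p ∈ chiSet C α, ∑ l ∈ p, f l = 0 :=
      fun p hp => (Finset.mem_filter.1 hp).2
    -- A is the disjoint union of p.erase i for p ∈ S
    have hAeq : Finset.univ.filter
        (fun j => j ≠ i ∧ ∃ p ∈ chiSet C α, i ∈ p ∧ j ∈ p)
        = S.biUnion (fun p => p.erase i) := by
      ext j
      simp only [hS, Finset.mem_filter, Finset.mem_univ, true_and,
        Finset.mem_biUnion, Finset.mem_erase]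
      constructor
      · rintro ⟨hji, p, hp, hip, hjp⟩
        exact ⟨p, ⟨hp, hip⟩, hji, hjp⟩
      · rintro ⟨p, ⟨hp, hip⟩, hji, hjp⟩
        exact ⟨hji, p, hp, hip, hjp⟩
    have hdisj : ∀ p ∈ S, ∀ q ∈ S, p ≠ q → Disjoint (p.erase i) (q.erase i) := by
      intro p hp q hq hpq
      rw [Finset.disjoint_left]
      intro j hjp hjq
      rcases Finset.mem_erase.1 hjp with ⟨hji, hjp'⟩
      rcases Finset.mem_erase.1 hjq with ⟨_, hjq'⟩
      rcases Finset.mem_filter.1 hp with ⟨hpchi, hip⟩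
      rcases Finset.mem_filter.1 hq with ⟨hqchi, hiq⟩
      obtain ⟨r, _, hr⟩ := C.existsUnique j i hji
      exact hpq ((hr p ⟨hchiP p hpchi, hjp', hip⟩).trans
        (hr q ⟨hchiP q hqchi, hjq', hiq⟩).symm)
    have hsumA : ∑ j ∈ Finset.univ.filter
        (fun j => j ≠ i ∧ ∃ p ∈ chiSet C α, i ∈ p ∧ j ∈ p), f j
        = -((S.card : ℤ) • f i) := by
      rw [hAeq, Finset.sum_biUnion hdisj]
      have hconst : ∀ p ∈ S, ∑ j ∈ p.erase i, f j = -f i := by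
        intro p hp
        rcases Finset.mem_filter.1 hp with ⟨hpchi, hip⟩
        have h3 : f i + ∑ j ∈ p.erase i, f j = ∑ j ∈ p, f j :=
          Finset.add_sum_erase p f hip
        rw [hchi0 p hpchi] at h3
        exact eq_neg_of_add_eq_zero_right h3
      rw [Finset.sum_congr rfl hconst, Finset.sum_const]
      simp [← Nat.cast_smul_eq_nsmul (R := ℤ)]
    have hsplit : ∑ j ∈ Finset.univ.filter
          (fun j => j ≠ i ∧ ∃ p ∈ chiSet C α, i ∈ p ∧ j ∈ p), f j
        + ∑ j ∈ Finset.univ.filter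
          (fun j => j ≠ i ∧ ¬ ∃ p ∈ chiSet C α, i ∈ p ∧ j ∈ p), f j
        = ∑ j ∈ Finset.univ.filter (fun j => j ≠ i), f j := by
      rw [← Finset.sum_filter_add_sum_filter_not (Finset.univ.filter (fun j => j ≠ i))
        (fun j => ∃ p ∈ chiSet C α, i ∈ p ∧ j ∈ p) f]
      congr 1 <;> · congr 1; ext j; simp [and_assoc]
    have hne : ∑ j ∈ Finset.univ.filter (fun j => j ≠ i), f j = -f i := by
      have h3 : f i + ∑ j ∈ Finset.univ.filter (fun j => j ≠ i), f j = ∑ j, f j := by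
        rw [Finset.filter_ne', Finset.add_sum_erase _ f (Finset.mem_univ i)]
      rw [hsumall] at h3
      exact eq_neg_of_add_eq_zero_right h3
    have hB : ∑ j ∈ Finset.univ.filter
        (fun j => j ≠ i ∧ ¬ ∃ p ∈ chiSet C α, i ∈ p ∧ j ∈ p), f j
        = ((S.card : ℤ) - 1) • f i := by
      have := hsplit
      rw [hsumA, hne] at this
      have h5 : ∑ j ∈ Finset.univ.filter
          (fun j => j ≠ i ∧ ¬ ∃ p ∈ chiSet C α, i ∈ p ∧ j ∈ p), f j
          = (S.card : ℤ) • f i - f i := by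
        rw [eq_sub_iff_add_eq]
        linear_combination (norm := module) this
      rw [h5, sub_smul, one_smul]
    have hQii : Qmat C α i i = (S.card : ℤ) - 1 := by
      simp [Qmat, hS]
    rw [hB, hQii]
    module
  refine ⟨fun i => key i, ?_⟩
  -- matrix statement
  ext a i
  have hQsymm : ∀ j, Qmat C α j i = Qmat C α i j := by
    intro j
    by_cases h : j = i
    · subst h; rfl
    · simp only [Qmat, if_neg h, if_neg (Ne.symm h)]
      congr 1
      simp only [eq_iff_iff]
      constructor <;> · rintro ⟨p, hp, h1, h2⟩; exact ⟨p, hp, h2, h1⟩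
  have hkey := congrFun (key i) a
  simp only [Pi.add_apply, Pi.smul_apply, Pi.neg_apply, Finset.sum_apply,
    smul_eq_mul, Pi.zero_apply] at hkey
  simp only [Matrix.mul_apply, Matrix.of_apply, Matrix.zero_apply]
  calc ∑ j, f j a * Qmat C α j i
      = ∑ j, f j a * Qmat C α i j := by
        exact Finset.sum_congr rfl (fun j _ => by rw [hQsymm j])
    _ = f i a * Qmat C α i i + ∑ j ∈ Finset.univ.erase i, f j a * Qmat C α i j :=
        (Finset.add_sum_erase _ (fun j => f j a * Qmat C α i j) (Finset.mem_univ i)).symm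
    _ = 0 := by
        have herase : ∑ j ∈ Finset.univ.erase i, f j a * Qmat C α i j
            = ∑ j ∈ Finset.univ.filter
              (fun j => j ≠ i ∧ ¬ ∃ p ∈ chiSet C α, i ∈ p ∧ j ∈ p), -(f j a) := by
          rw [← Finset.sum_filter_add_sum_filter_not (Finset.univ.erase i)
            (fun j => ∃ p ∈ chiSet C α, i ∈ p ∧ j ∈ p) (fun j => f j a * Qmat C α i j)]
          have hz : ∑ j ∈ (Finset.univ.erase i).filter
              (fun j => ∃ p ∈ chiSet C α, i ∈ p ∧ j ∈ p), f j a * Qmat C α i j = 0 := by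
            apply Finset.sum_eq_zero
            intro j hj
            rcases Finset.mem_filter.1 hj with ⟨hj1, hj2⟩
            have hji : j ≠ i := (Finset.mem_erase.1 hj1).1
            simp [Qmat, Ne.symm hji, hj2]
          rw [hz, zero_add]
          apply Finset.sum_congr
          · ext j
            simp [Finset.mem_erase, and_comm]
          · intro j hj
            rcases Finset.mem_filter.1 hj with ⟨hj1, hji, hj2⟩
            simp [Qmat, Ne.symm hji, hj2]
        rw [herase, Finset.sum_neg_distrib]
        have : ∑ j ∈ Finset.univ.filter
            (fun j => j ≠ i ∧ ¬ ∃ p ∈ chiSet C α, i ∈ p ∧ j ∈ p), f j a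
            = Qmat C α i i * f i a := by linarith [hkey]
        rw [this]; ring
end

section
/- Let p_1, p_2, p_3 be three points of a line combinatorics, each of multiplicity greater than two, regarded as point-type admissible maps. Then {p_1, p_2, p_3} form a triangle of admissible classes (i.e., Υ({α_1,α_2,α_3}) = Σ Υ({α_i}) - 1 for the associated point-type admissible maps α_i) if and only if p_i ∩ p_j ≠ ∅ for all i ≠ j but p_1 ∩ p_2 ∩ p_3 = ∅ (the three points are pairwise joined by lines but not mutually incident via a common line). -/
open scoped BigOperators

/-- `α` is a point-type admissible map associated with the point `p` (of
multiplicity `m = p.card ≥ 3`): a surjection onto `ℤ^{m-1}` killing all the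
lines outside `p`, and mapping any `m-1` of the lines of `p` to linearly
independent vectors (so `p` is its only non-double point; cf. Example 1 of the
paper). -/
def IsPointType {n : ℕ} (C : LineCombinatorics n) (p : Finset (Fin n))
    (α : Hmod n →ₗ[ℤ] (Fin (p.card - 1) → ℤ)) : Prop :=
  p ∈ C.P ∧ 3 ≤ p.card ∧ Function.Surjective α ∧
    (∀ j : Fin n, j ∉ p → α (egen n j) = 0) ∧
    ∀ j ∈ p, LinearIndependent ℤ (fun l : {x // x ∈ p.erase j} => α (egen n l.1))

/-- Three admissible maps form a triangle if the corank of the intersection of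
their kernels equals `Υ({α₁}) + Υ({α₂}) + Υ({α₃}) - 1`. -/
def IsTriangle {n r₁ r₂ r₃ : ℕ}
    (α₁ : Hmod n →ₗ[ℤ] (Fin r₁ → ℤ)) (α₂ : Hmod n →ₗ[ℤ] (Fin r₂ → ℤ))
    (α₃ : Hmod n →ₗ[ℤ] (Fin r₃ → ℤ)) : Prop :=
  Module.finrank ℤ (Hmod n) -
      Module.finrank ℤ
        ↥(LinearMap.ker α₁ ⊓ LinearMap.ker α₂ ⊓ LinearMap.ker α₃) =
    r₁ + r₂ + r₃ - 1

/-!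
Pulled back to `ℤⁿ`, the kernel of the point-type map of `p` is the lattice `constOn p` of
vectors constant on the lines of `p`, so `Υ` of three points is the corank of
`constOn p₁ ⊓ constOn p₂ ⊓ constOn p₃`. Coranks of lattices satisfy the modular law, and
`constOn S ⊔ constOn T = ⊤` as soon as `S` and `T` share at most one line, so distinct points
impose independent conditions unless `p₃` meets `p₁ ∪ p₂` in two lines. In that case the three
points glue to the single block `p₁ ∪ p₂ ∪ p₃`, of corank `Σ (|pᵢ| - 1) - |p₁ ∩ p₂|`, which is
one short of the sum exactly when `p₁` and `p₂` meet too. A repeated point loses `|p| - 1 ≥ 2`.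
-/

open Module Submodule Finset

section QuotientRank

variable {R M : Type*} [CommRing R] [IsDomain R] [IsNoetherianRing R] [AddCommGroup M]
  [Module R M] [Module.Finite R M]

lemma finrank_quotient_inf_add_finrank_quotient_sup (A B : Submodule R M) :
    finrank R (M ⧸ A ⊓ B) + finrank R (M ⧸ A ⊔ B) = finrank R (M ⧸ A) + finrank R (M ⧸ B) := by
  have modular : finrank R ↥(A ⊔ B) + finrank R ↥(A ⊓ B) = finrank R A + finrank R B := by
    rw [← Nat.cast_inj (R := Cardinal), Nat.cast_add, Nat.cast_add, finrank_eq_rank,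
      finrank_eq_rank, finrank_eq_rank, finrank_eq_rank]
    exact rank_sup_add_rank_inf_eq A B
  have := (A ⊓ B).finrank_quotient_add_finrank
  have := (A ⊔ B).finrank_quotient_add_finrank
  have := A.finrank_quotient_add_finrank
  have := B.finrank_quotient_add_finrank
  omega

lemma finrank_quotient_inf_le (A B : Submodule R M) :
    finrank R (M ⧸ A ⊓ B) ≤ finrank R (M ⧸ A) + finrank R (M ⧸ B) :=
  (Nat.le_add_right _ _).trans (finrank_quotient_inf_add_finrank_quotient_sup A B).le

lemma finrank_quotient_inf_of_sup_eq_top {A B : Submodule R M} (h : A ⊔ B = ⊤) :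
    finrank R (M ⧸ A ⊓ B) = finrank R (M ⧸ A) + finrank R (M ⧸ B) := by
  have := finrank_quotient_inf_add_finrank_quotient_sup A B
  have htop : finrank R (M ⧸ (⊤ : Submodule R M)) = 0 := finrank_zero_of_subsingleton
  rw [h, htop] at this
  omega

end QuotientRank

lemma finrank_quotient_comap_mkQ {R M : Type*} [Ring R] [AddCommGroup M] [Module R M]
    (N : Submodule R M) (K : Submodule R (M ⧸ N)) :
    finrank R ((M ⧸ N) ⧸ K) = finrank R (M ⧸ K.comap N.mkQ) := by
  obtain ⟨T, hNT, rfl⟩ : ∃ T, N ≤ T ∧ T.map N.mkQ = K :=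
    ⟨K.comap N.mkQ, (ker_mkQ N).symm.le.trans (LinearMap.ker_le_comap _),
      map_comap_eq_of_surjective N.mkQ_surjective K⟩
  rw [comap_map_mkQ, sup_eq_right.2 hNT]
  exact (quotientQuotientEquivQuotient N T hNT).finrank_eq

section ConstOn

variable {ι : Type*}

def constOn (S : Finset ι) : Submodule ℤ (ι → ℤ) where
  carrier := {x | ∀ i ∈ S, ∀ j ∈ S, x i = x j}
  add_mem' hx hy i hi j hj := by simp [hx i hi j hj, hy i hi j hj]
  zero_mem' _ _ _ _ := rfl
  smul_mem' c x hx i hi j hj := by simp [hx i hi j hj]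

lemma constOn_anti {S T : Finset ι} (h : S ⊆ T) : constOn T ≤ constOn S :=
  fun _ hx i hi j hj => hx i (h hi) j (h hj)

lemma constOn_inf_constOn [DecidableEq ι] {S T : Finset ι} (h : (S ∩ T).Nonempty) :
    constOn S ⊓ constOn T = constOn (S ∪ T) := by
  obtain ⟨a, ha⟩ := h
  obtain ⟨haS, haT⟩ := mem_inter.1 ha
  refine le_antisymm (fun x ⟨hS, hT⟩ => ?_) (le_inf (constOn_anti subset_union_left)
    (constOn_anti subset_union_right))
  have hxa : ∀ i ∈ S ∪ T, x i = x a := by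
    intro i hi
    rcases mem_union.1 hi with hi | hi
    exacts [hS i hi a haS, hT i hi a haT]
  exact fun i hi j hj => (hxa i hi).trans (hxa j hj).symm

lemma constOn_sup_constOn [DecidableEq ι] {S T : Finset ι} (h : #(S ∩ T) ≤ 1) :
    constOn S ⊔ constOn T = ⊤ := by
  cases isEmpty_or_nonempty ι
  · exact Subsingleton.elim _ _
  obtain ⟨t, ht⟩ := card_le_one_iff_subset_singleton.1 h
  refine eq_top_iff.2 fun x _ => mem_sup.2 ?_
  -- flatten `x` to its value at `t` on `S`; what is left vanishes on `T`
  refine ⟨fun i => if i ∈ S then x t else x i, fun i hi j hj => by simp [hi, hj],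
    x - fun i => if i ∈ S then x t else x i, fun i hi j hj => ?_, add_sub_cancel _ _⟩
  have hvanish : ∀ k ∈ T, x k - (if k ∈ S then x t else x k) = 0 := by
    intro k hk
    split_ifs with hkS
    · rw [mem_singleton.1 (ht (mem_inter.2 ⟨hkS, hk⟩)), sub_self]
    · exact sub_self _
  exact (hvanish i hi).trans (hvanish j hj).symm

lemma finrank_quotient_constOn [Fintype ι] [DecidableEq ι] (S : Finset ι) :
    finrank ℤ ((ι → ℤ) ⧸ constOn S) = #S - 1 := by
  rcases S.eq_empty_or_nonempty with rfl | ⟨s, hs⟩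
  · have : constOn (∅ : Finset ι) = ⊤ := eq_top_iff.2 fun _ _ i hi => absurd hi (notMem_empty i)
    rw [this]
    exact finrank_zero_of_subsingleton
  let F : (ι → ℤ) →ₗ[ℤ] ((S.erase s) → ℤ) := LinearMap.pi fun i =>
    LinearMap.proj (R := ℤ) (φ := fun _ : ι => ℤ) i.1 - LinearMap.proj s
  have hker : LinearMap.ker F = constOn S := by
    ext x
    simp only [LinearMap.mem_ker, funext_iff]
    refine ⟨fun h => ?_, fun hx i => sub_eq_zero.2 (hx _ (mem_of_mem_erase i.2) s hs)⟩
    have hxs : ∀ k ∈ S, x k = x s := fun k hk => by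
      by_cases hks : k = s
      · rw [hks]
      · exact sub_eq_zero.1 (h ⟨k, mem_erase.2 ⟨hks, hk⟩⟩)
    exact fun i hi j hj => (hxs i hi).trans (hxs j hj).symm
  have hsurj : Function.Surjective F := by
    intro y
    refine ⟨fun i => if h : i ∈ S.erase s then y ⟨i, h⟩ else 0, funext fun i => ?_⟩
    have hi := mem_erase.1 i.2
    simp [F, hi.1, hi.2]
  rw [← hker, (F.quotKerEquivOfSurjective hsurj).finrank_eq, finrank_pi, Fintype.card_coe,
    card_erase_of_mem hs]

variable [Fintype ι] [DecidableEq ι] {S₁ S₂ S₃ : Finset ι}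

lemma finrank_quotient_constOn_inf₃_add_one_eq_iff_of_card_inter_le_one
    (h₁₂ : #(S₁ ∩ S₂) ≤ 1) (h₁₃ : #(S₁ ∩ S₃) ≤ 1) (h₂₃ : #(S₂ ∩ S₃) ≤ 1) :
    finrank ℤ ((ι → ℤ) ⧸ constOn S₁ ⊓ constOn S₂ ⊓ constOn S₃) + 1 =
        (#S₁ - 1) + (#S₂ - 1) + (#S₃ - 1) ↔
      (S₁ ∩ S₂).Nonempty ∧ (S₁ ∩ S₃).Nonempty ∧ (S₂ ∩ S₃).Nonempty ∧ S₁ ∩ S₂ ∩ S₃ = ∅ := by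
  rcases le_or_gt #((S₁ ∪ S₂) ∩ S₃) 1 with hsmall | hlarge
  · have hsup : constOn S₁ ⊓ constOn S₂ ⊔ constOn S₃ = ⊤ :=
      eq_top_iff.2 <| (constOn_sup_constOn hsmall).ge.trans <| sup_le_sup_right
        (le_inf (constOn_anti subset_union_left) (constOn_anti subset_union_right)) _
    rw [finrank_quotient_inf_of_sup_eq_top hsup,
      finrank_quotient_inf_of_sup_eq_top (constOn_sup_constOn h₁₂),
      finrank_quotient_constOn, finrank_quotient_constOn, finrank_quotient_constOn]
    refine iff_of_false (by omega) ?_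
    rintro ⟨-, ⟨b, hb⟩, ⟨d, hd⟩, htriple⟩
    rw [mem_inter] at hb hd
    obtain rfl : b = d := card_le_one.1 hsmall b (by simp [hb]) d (by simp [hd])
    simpa [htriple] using (show b ∈ S₁ ∩ S₂ ∩ S₃ by simp [hb, hd])
  · have hpair := card_union_add_card_inter (S₁ ∩ S₃) (S₂ ∩ S₃)
    rw [← union_inter_distrib_right,
      show S₁ ∩ S₃ ∩ (S₂ ∩ S₃) = S₁ ∩ S₂ ∩ S₃ by ext; simp only [mem_inter]; tauto] at hpair
    obtain ⟨b, hb⟩ : (S₁ ∩ S₃).Nonempty := card_pos.1 (by omega)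
    obtain ⟨d, hd⟩ : (S₂ ∩ S₃).Nonempty := card_pos.1 (by omega)
    have htriple : S₁ ∩ S₂ ∩ S₃ = ∅ := card_eq_zero.1 (by omega)
    have hglue : constOn S₁ ⊓ constOn S₂ ⊓ constOn S₃ = constOn (S₁ ∪ S₂ ∪ S₃) := by
      rw [inf_right_comm, constOn_inf_constOn ⟨b, hb⟩, constOn_inf_constOn
        ⟨d, by simp only [mem_inter, mem_union] at hd ⊢; tauto⟩, union_right_comm]
    have hU := card_union_add_card_inter (S₁ ∪ S₂) S₃
    have h12 := card_union_add_card_inter S₁ S₂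
    have h1 := card_le_card (inter_subset_left : S₁ ∩ S₃ ⊆ S₁)
    have h2 := card_le_card (inter_subset_left : S₂ ∩ S₃ ⊆ S₂)
    have h3 := card_le_card (inter_subset_right : (S₁ ∪ S₂) ∩ S₃ ⊆ S₃)
    rw [hglue, finrank_quotient_constOn]
    refine ⟨fun h => ⟨card_pos.1 (by omega), ⟨b, hb⟩, ⟨d, hd⟩, htriple⟩, fun ⟨h, _⟩ => ?_⟩
    have := card_pos.2 h
    omega

lemma finrank_quotient_constOn_inf₃_add_one_lt_of_eq_or_eq_or_eq (h₁ : 3 ≤ #S₁)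
    (h₂ : 3 ≤ #S₂) (h₃ : 3 ≤ #S₃) (hrep : S₁ = S₂ ∨ S₁ = S₃ ∨ S₂ = S₃) :
    finrank ℤ ((ι → ℤ) ⧸ constOn S₁ ⊓ constOn S₂ ⊓ constOn S₃) + 1 <
      (#S₁ - 1) + (#S₂ - 1) + (#S₃ - 1) := by
  have hpair (S T : Finset ι) := finrank_quotient_inf_le (constOn S) (constOn T)
  simp only [finrank_quotient_constOn] at hpair
  rcases hrep with rfl | rfl | rfl
  · rw [inf_idem]
    have := hpair S₁ S₃
    omega
  · rw [inf_right_comm, inf_idem]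
    have := hpair S₁ S₂
    omega
  · rw [inf_assoc, inf_idem]
    have := hpair S₁ S₂
    omega

lemma finrank_quotient_constOn_inf₃_add_one_eq_iff (h₁ : 3 ≤ #S₁) (h₂ : 3 ≤ #S₂)
    (h₃ : 3 ≤ #S₃) (h₁₂ : S₁ ≠ S₂ → #(S₁ ∩ S₂) ≤ 1) (h₁₃ : S₁ ≠ S₃ → #(S₁ ∩ S₃) ≤ 1)
    (h₂₃ : S₂ ≠ S₃ → #(S₂ ∩ S₃) ≤ 1) :
    finrank ℤ ((ι → ℤ) ⧸ constOn S₁ ⊓ constOn S₂ ⊓ constOn S₃) + 1 =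
        (#S₁ - 1) + (#S₂ - 1) + (#S₃ - 1) ↔
      (S₁ ∩ S₂).Nonempty ∧ (S₁ ∩ S₃).Nonempty ∧ (S₂ ∩ S₃).Nonempty ∧ S₁ ∩ S₂ ∩ S₃ = ∅ := by
  by_cases hrep : S₁ = S₂ ∨ S₁ = S₃ ∨ S₂ = S₃
  · refine iff_of_false
      (finrank_quotient_constOn_inf₃_add_one_lt_of_eq_or_eq_or_eq h₁ h₂ h₃ hrep).ne ?_
    rintro ⟨h₁₂, h₁₃, h₂₃, htriple⟩
    rcases hrep with rfl | rfl | rfl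
    · rw [inter_self] at htriple
      exact h₁₃.ne_empty htriple
    · rw [inter_right_comm, inter_self] at htriple
      exact h₁₂.ne_empty htriple
    · rw [inter_assoc, inter_self] at htriple
      exact h₁₂.ne_empty htriple
  · simp only [not_or] at hrep
    exact finrank_quotient_constOn_inf₃_add_one_eq_iff_of_card_inter_le_one
      (h₁₂ hrep.1) (h₁₃ hrep.2.1) (h₂₃ hrep.2.2)

end ConstOn

abbrev Hmod.mkQ (n : ℕ) : (Fin n → ℤ) →ₗ[ℤ] Hmod n := Submodule.mkQ _

section PointType

variable {n : ℕ} {M : Type*} [AddCommGroup M]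

lemma apply_mkQ_eq_sum (α : Hmod n →ₗ[ℤ] M) {p : Finset (Fin n)}
    (hzero : ∀ j, j ∉ p → α (egen n j) = 0) (x : Fin n → ℤ) :
    α (Hmod.mkQ n x) = ∑ j ∈ p, x j • α (egen n j) := by
  have hx : x = ∑ j, x j • Pi.single j 1 := by
    ext i
    simp [Pi.single_apply]
  calc α (Hmod.mkQ n x) = ∑ j, x j • α (egen n j) := by
        conv_lhs => rw [hx]
        simp only [map_sum, map_smul]
        rfl
    _ = ∑ j ∈ p, x j • α (egen n j) :=
        (sum_subset (subset_univ p) fun j _ hj => by rw [hzero j hj, smul_zero]).symm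

lemma comap_ker_eq_constOn (α : Hmod n →ₗ[ℤ] M) {p : Finset (Fin n)}
    (hzero : ∀ j, j ∉ p → α (egen n j) = 0) {j₀ : Fin n} (hj₀ : j₀ ∈ p)
    (hind : LinearIndependent ℤ (fun l : {x // x ∈ p.erase j₀} => α (egen n l.1))) :
    (LinearMap.ker α).comap (Hmod.mkQ n) = constOn p := by
  have hsum : ∑ j ∈ p, α (egen n j) = 0 := by
    have h1 : Hmod.mkQ n (fun _ => 1) = 0 :=
      (Submodule.Quotient.mk_eq_zero _).2 (mem_span_singleton_self _)
    simpa [h1] using (apply_mkQ_eq_sum α hzero (fun _ => 1)).symm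
  ext x
  simp only [mem_comap, LinearMap.mem_ker, apply_mkQ_eq_sum α hzero]
  constructor
  · intro hx
    have hind' : LinearIndepOn ℤ (fun j => α (egen n j)) ↑(p.erase j₀) := hind
    have hdiff : ∑ j ∈ p.erase j₀, (x j - x j₀) • α (egen n j) = 0 := by
      rw [sum_erase _ (by rw [sub_self, zero_smul])]
      simp only [sub_smul, sum_sub_distrib, ← Finset.smul_sum, hx, hsum, smul_zero, sub_zero]
    have hx₀ : ∀ j ∈ p, x j = x j₀ := fun j hj => by
      by_cases hjj₀ : j = j₀
      · rw [hjj₀]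
      · exact sub_eq_zero.1 <| linearIndepOn_finset_iff.1 hind' (fun j => x j - x j₀) hdiff j
          (mem_erase.2 ⟨hjj₀, hj⟩)
    exact fun i hi j hj => (hx₀ i hi).trans (hx₀ j hj).symm
  · intro hx
    rw [sum_congr rfl fun j hj => by rw [hx j hj j₀ hj₀], ← Finset.smul_sum, hsum, smul_zero]

lemma IsPointType.comap_ker {C : LineCombinatorics n} {p : Finset (Fin n)}
    {α : Hmod n →ₗ[ℤ] (Fin (p.card - 1) → ℤ)} (h : IsPointType C p α) :
    (LinearMap.ker α).comap (Hmod.mkQ n) = constOn p := by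
  obtain ⟨-, hcard, -, hzero, hind⟩ := h
  obtain ⟨j₀, hj₀⟩ : p.Nonempty := card_pos.1 (by omega)
  exact comap_ker_eq_constOn α hzero hj₀ (hind j₀ hj₀)

lemma isTriangle_iff_finrank_quotient_constOn {C : LineCombinatorics n}
    {p₁ p₂ p₃ : Finset (Fin n)}
    {α₁ : Hmod n →ₗ[ℤ] (Fin (p₁.card - 1) → ℤ)} {α₂ : Hmod n →ₗ[ℤ] (Fin (p₂.card - 1) → ℤ)}
    {α₃ : Hmod n →ₗ[ℤ] (Fin (p₃.card - 1) → ℤ)} (h₁ : IsPointType C p₁ α₁)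
    (h₂ : IsPointType C p₂ α₂) (h₃ : IsPointType C p₃ α₃) :
    IsTriangle α₁ α₂ α₃ ↔
      finrank ℤ ((Fin n → ℤ) ⧸ constOn p₁ ⊓ constOn p₂ ⊓ constOn p₃) + 1 =
        (#p₁ - 1) + (#p₂ - 1) + (#p₃ - 1) := by
  rw [IsTriangle, ← finrank_quotient, finrank_quotient_comap_mkQ, comap_inf, comap_inf,
    h₁.comap_ker, h₂.comap_ker, h₃.comap_ker]
  have := h₁.2.1
  omega

end PointType

lemma LineCombinatorics.card_inter_le_one {n : ℕ} (C : LineCombinatorics n)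
    {p q : Finset (Fin n)} (hp : p ∈ C.P) (hq : q ∈ C.P) (hpq : p ≠ q) : #(p ∩ q) ≤ 1 := by
  refine card_le_one.2 fun a ha b hb => by_contra fun hab => hpq ?_
  rw [mem_inter] at ha hb
  obtain ⟨u, -, hu⟩ := C.existsUnique a b hab
  exact (hu p ⟨hp, ha.1, hb.1⟩).trans (hu q ⟨hq, ha.2, hb.2⟩).symm

/-- Three points `p₁, p₂, p₃` of multiplicity greater than
two, regarded as point-type admissible maps `α₁, α₂, α₃`, form a triangle of
admissible classes if and only if they pairwise share a line but no line goes
through all three of them. -/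
theorem pointType_triangle_iff {n : ℕ} (C : LineCombinatorics n)
    (p₁ p₂ p₃ : Finset (Fin n))
    (α₁ : Hmod n →ₗ[ℤ] (Fin (p₁.card - 1) → ℤ))
    (α₂ : Hmod n →ₗ[ℤ] (Fin (p₂.card - 1) → ℤ))
    (α₃ : Hmod n →ₗ[ℤ] (Fin (p₃.card - 1) → ℤ))
    (h₁ : IsPointType C p₁ α₁) (h₂ : IsPointType C p₂ α₂)
    (h₃ : IsPointType C p₃ α₃) :
    IsTriangle α₁ α₂ α₃ ↔
      ((p₁ ∩ p₂).Nonempty ∧ (p₁ ∩ p₃).Nonempty ∧ (p₂ ∩ p₃).Nonempty ∧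
        p₁ ∩ p₂ ∩ p₃ = ∅) := by
  rw [isTriangle_iff_finrank_quotient_constOn h₁ h₂ h₃]
  exact finrank_quotient_constOn_inf₃_add_one_eq_iff h₁.2.1 h₂.2.1 h₃.2.1
    (C.card_inter_le_one h₁.1 h₂.1) (C.card_inter_le_one h₁.1 h₃.1)
    (C.card_inter_le_one h₂.1 h₃.1)
end
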